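/- arXiv:2502.10019 — 7 statements merged into one kernel-verified Lean document; each statement's English description precedes it below -/
import Mathlib

section
/- Suppose ψ : (0,1)×(0,1] → ℝ is nonnegative, satisfies ψ(a,b) = 0 whenever H₂(a) ≤ b, satisfies ψ(1−a,b) = ψ(a,b) for all a,b, and satisfies: for every finite probability space (X,p) and all functions u,w : X → (0,1), (1/2)·E[(u−w)(J(w)−J(u))] ≥ ψ((E[u]+E[w])/2, (E[H₂(u)]+E[H₂(w)])/2) − (ψ(E[u],E[H₂(u)]) + ψ(E[w],E[H₂(w)]))/2. Then for every n ≥ 1 and every function v : {−1,1}ⁿ → (0,1), one has 2⁻ⁿ · Σ_{x∼y} (v_x − v_y)(J(v_y) − J(v_x)) ≥ ψ(2⁻ⁿ·Σ_y v_y, 2⁻ⁿ·Σ_y H₂(v_y)), where the first sum is over unordered pairs of adjacent vertices, each counted once. -/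
/-- Binary entropy function. -/
noncomputable def H2 (x : ℝ) : ℝ := -x * Real.logb 2 x - (1 - x) * Real.logb 2 (1 - x)

/-- `J`, the derivative of the binary entropy function. -/
noncomputable def J (x : ℝ) : ℝ := Real.logb 2 ((1 - x) / x)

/-- Flip the `i`-th coordinate of a vertex of the hypercube. -/
def flipCoord {n : ℕ} (y : Fin n → Bool) (i : Fin n) : Fin n → Bool :=
  Function.update y i (!(y i))

lemma flip_cons_zero {n : ℕ} (b : Bool) (z : Fin n → Bool) :
    flipCoord (Fin.cons b z) 0 = Fin.cons (!b) z := by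
  simp [flipCoord, Fin.update_cons_zero]

lemma flip_cons_succ {n : ℕ} (b : Bool) (z : Fin n → Bool) (i : Fin n) :
    flipCoord (Fin.cons b z) i.succ = Fin.cons b (flipCoord z i) := by
  unfold flipCoord
  rw [Fin.cons_succ, Fin.cons_update]

lemma sum_cons {n : ℕ} (f : (Fin (n + 1) → Bool) → ℝ) :
    ∑ y : Fin (n + 1) → Bool, f y
      = ∑ z : Fin n → Bool, (f (Fin.cons false z) + f (Fin.cons true z)) := by
  rw [← Fintype.sum_equiv (Fin.consEquiv fun _ => Bool)
      (fun p => f (Fin.cons p.1 p.2)) f (fun p => rfl)]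
  rw [Fintype.sum_prod_type, Fintype.sum_bool, ← Finset.sum_add_distrib]
  exact Finset.sum_congr rfl fun z _ => add_comm _ _

lemma H2_eq (x : ℝ) : H2 x = Real.binEntropy x / Real.log 2 := by
  unfold H2 Real.binEntropy Real.logb
  rw [Real.log_inv, Real.log_inv]
  ring

lemma H2_pos {x : ℝ} (hx : x ∈ Set.Ioo (0:ℝ) 1) : 0 < H2 x := by
  rw [H2_eq]
  exact div_pos (Real.binEntropy_pos hx.1 hx.2) (Real.log_pos one_lt_two)

lemma H2_le_one {x : ℝ} : H2 x ≤ 1 := by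
  rw [H2_eq, div_le_one (Real.log_pos one_lt_two)]
  exact Real.binEntropy_le_log_two

lemma aux_main (ψ : ℝ → ℝ → ℝ)
    (hzero : ∀ a b : ℝ, a ∈ Set.Ioo (0 : ℝ) 1 → b ∈ Set.Ioc (0 : ℝ) 1 →
      H2 a ≤ b → ψ a b = 0)
    (hkey : ∀ (X : Type) [Fintype X], ∀ p u w : X → ℝ,
      (∀ x, 0 ≤ p x) → (∑ x, p x) = 1 →
      (∀ x, u x ∈ Set.Ioo (0 : ℝ) 1) → (∀ x, w x ∈ Set.Ioo (0 : ℝ) 1) →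
      (1 / 2) * (∑ x, p x * ((u x - w x) * (J (w x) - J (u x)))) ≥
        ψ (((∑ x, p x * u x) + ∑ x, p x * w x) / 2)
          (((∑ x, p x * H2 (u x)) + ∑ x, p x * H2 (w x)) / 2)
        - (ψ (∑ x, p x * u x) (∑ x, p x * H2 (u x))
           + ψ (∑ x, p x * w x) (∑ x, p x * H2 (w x))) / 2) :
    ∀ (n : ℕ) (v : (Fin n → Bool) → ℝ), (∀ y, v y ∈ Set.Ioo (0 : ℝ) 1) →
    ((2 : ℝ) ^ n)⁻¹ * ((1 / 2) * ∑ y : Fin n → Bool, ∑ i : Fin n,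
        (v (flipCoord y i) - v y) * (J (v y) - J (v (flipCoord y i)))) ≥
      ψ (((2 : ℝ) ^ n)⁻¹ * ∑ y : Fin n → Bool, v y)
        (((2 : ℝ) ^ n)⁻¹ * ∑ y : Fin n → Bool, H2 (v y)) := by
  intro n
  induction n with
  | zero =>
    intro v hv
    have h1 : ∀ f : (Fin 0 → Bool) → ℝ, ∑ y : Fin 0 → Bool, f y = f default := by
      intro f
      rw [Fintype.sum_unique f]
      congr 1
      exact Subsingleton.elim _ _
    simp only [pow_zero, inv_one, one_mul, h1, Finset.univ_eq_empty, Finset.sum_empty,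
      mul_zero]
    rw [hzero (v default) (H2 (v default)) (hv default)
      ⟨H2_pos (hv default), H2_le_one⟩ le_rfl]
  | succ n ih =>
    intro v hv
    obtain ⟨u, hu⟩ : ∃ u : (Fin n → Bool) → ℝ, ∀ z, u z = v (Fin.cons false z) :=
      ⟨_, fun _ => rfl⟩
    obtain ⟨w, hw⟩ : ∃ w : (Fin n → Bool) → ℝ, ∀ z, w z = v (Fin.cons true z) :=
      ⟨_, fun _ => rfl⟩
    have hu' : ∀ z, u z ∈ Set.Ioo (0:ℝ) 1 := fun z => (hu z) ▸ hv _
    have hw' : ∀ z, w z ∈ Set.Ioo (0:ℝ) 1 := fun z => (hw z) ▸ hv _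
    have hIu := ih u hu'
    have hIw := ih w hw'
    have hpsum : (∑ _x : Fin n → Bool, ((2:ℝ)^n)⁻¹) = 1 := by
      rw [Finset.sum_const, Finset.card_univ, nsmul_eq_mul]
      rw [show (Fintype.card (Fin n → Bool) : ℝ) = 2 ^ n by
        simp [Fintype.card_fun]]
      rw [mul_inv_cancel₀ (by positivity)]
    have hK := hkey (Fin n → Bool) (fun _ => ((2:ℝ)^n)⁻¹) u w
      (fun _ => by positivity) hpsum hu' hw'
    simp only [← Finset.mul_sum] at hK
    have hS1 : ∑ y : Fin (n+1) → Bool, v y = (∑ z, u z) + ∑ z, w z := by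
      rw [sum_cons, Finset.sum_add_distrib]
      simp only [hu, hw]
    have hS2 : ∑ y : Fin (n+1) → Bool, H2 (v y) = (∑ z, H2 (u z)) + ∑ z, H2 (w z) := by
      rw [sum_cons, Finset.sum_add_distrib]
      simp only [hu, hw]
    have hE : ∑ y : Fin (n+1) → Bool, ∑ i : Fin (n+1),
          (v (flipCoord y i) - v y) * (J (v y) - J (v (flipCoord y i)))
        = (∑ z : Fin n → Bool, ∑ j : Fin n,
            (u (flipCoord z j) - u z) * (J (u z) - J (u (flipCoord z j))))
        + (∑ z : Fin n → Bool, ∑ j : Fin n,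
            (w (flipCoord z j) - w z) * (J (w z) - J (w (flipCoord z j))))
        + 2 * ∑ z : Fin n → Bool, (u z - w z) * (J (w z) - J (u z)) := by
      rw [sum_cons, Finset.mul_sum, ← Finset.sum_add_distrib, ← Finset.sum_add_distrib]
      refine Finset.sum_congr rfl fun z _ => ?_
      rw [Fin.sum_univ_succ, Fin.sum_univ_succ]
      simp only [flip_cons_zero, flip_cons_succ, Fin.cons_zero, Fin.cons_succ,
        Bool.not_false, Bool.not_true, hu, hw]
      ring
    have h2 : ((2:ℝ) ^ (n+1))⁻¹ = ((2:ℝ)^n)⁻¹ / 2 := by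
      rw [pow_succ, mul_inv]; ring
    rw [hE, hS1, hS2]
    have harg1 : ((2:ℝ) ^ (n+1))⁻¹ * ((∑ z, u z) + ∑ z, w z)
        = (((2:ℝ)^n)⁻¹ * ∑ z, u z + ((2:ℝ)^n)⁻¹ * ∑ z, w z) / 2 := by
      rw [h2]; ring
    have harg2 : ((2:ℝ) ^ (n+1))⁻¹ * ((∑ z, H2 (u z)) + ∑ z, H2 (w z))
        = (((2:ℝ)^n)⁻¹ * ∑ z, H2 (u z) + ((2:ℝ)^n)⁻¹ * ∑ z, H2 (w z)) / 2 := by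
      rw [h2]; ring
    rw [harg1, harg2]
    have hY : ((2:ℝ) ^ (n+1))⁻¹ * ((1/2) *
          ((∑ z : Fin n → Bool, ∑ j : Fin n,
            (u (flipCoord z j) - u z) * (J (u z) - J (u (flipCoord z j))))
          + (∑ z : Fin n → Bool, ∑ j : Fin n,
            (w (flipCoord z j) - w z) * (J (w z) - J (w (flipCoord z j))))
          + 2 * ∑ z : Fin n → Bool, (u z - w z) * (J (w z) - J (u z))))
        = (((2:ℝ)^n)⁻¹ * ((1/2) * (∑ z : Fin n → Bool, ∑ j : Fin n,
            (u (flipCoord z j) - u z) * (J (u z) - J (u (flipCoord z j)))))) / 2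
        + (((2:ℝ)^n)⁻¹ * ((1/2) * (∑ z : Fin n → Bool, ∑ j : Fin n,
            (w (flipCoord z j) - w z) * (J (w z) - J (w (flipCoord z j)))))) / 2
        + (1/2) * (((2:ℝ)^n)⁻¹ * ∑ z : Fin n → Bool, (u z - w z) * (J (w z) - J (u z))) := by
      rw [h2]; ring
    rw [hY]
    linarith [hIu, hIw, hK]

theorem stmt1 (ψ : ℝ → ℝ → ℝ)
    (hnonneg : ∀ a b : ℝ, a ∈ Set.Ioo (0 : ℝ) 1 → b ∈ Set.Ioc (0 : ℝ) 1 → 0 ≤ ψ a b)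
    (hzero : ∀ a b : ℝ, a ∈ Set.Ioo (0 : ℝ) 1 → b ∈ Set.Ioc (0 : ℝ) 1 →
      H2 a ≤ b → ψ a b = 0)
    (hsym : ∀ a b : ℝ, a ∈ Set.Ioo (0 : ℝ) 1 → b ∈ Set.Ioc (0 : ℝ) 1 →
      ψ (1 - a) b = ψ a b)
    (hkey : ∀ (X : Type) [Fintype X], ∀ p u w : X → ℝ,
      (∀ x, 0 ≤ p x) → (∑ x, p x) = 1 →
      (∀ x, u x ∈ Set.Ioo (0 : ℝ) 1) → (∀ x, w x ∈ Set.Ioo (0 : ℝ) 1) →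
      (1 / 2) * (∑ x, p x * ((u x - w x) * (J (w x) - J (u x)))) ≥
        ψ (((∑ x, p x * u x) + ∑ x, p x * w x) / 2)
          (((∑ x, p x * H2 (u x)) + ∑ x, p x * H2 (w x)) / 2)
        - (ψ (∑ x, p x * u x) (∑ x, p x * H2 (u x))
           + ψ (∑ x, p x * w x) (∑ x, p x * H2 (w x))) / 2)
    (n : ℕ) (hn : 1 ≤ n) (v : (Fin n → Bool) → ℝ)
    (hv : ∀ y, v y ∈ Set.Ioo (0 : ℝ) 1) :
    ((2 : ℝ) ^ n)⁻¹ * ((1 / 2) * ∑ y : Fin n → Bool, ∑ i : Fin n,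
        (v (flipCoord y i) - v y) * (J (v y) - J (v (flipCoord y i)))) ≥
      ψ (((2 : ℝ) ^ n)⁻¹ * ∑ y : Fin n → Bool, v y)
        (((2 : ℝ) ^ n)⁻¹ * ∑ y : Fin n → Bool, H2 (v y)) := by
  exact aux_main ψ hzero hkey n v hv
end

section
/- Let (X,p) be a finite probability space and let u,w : X → (0,1). Then there exists a probability mass function q on X whose support has at most 5 elements such that E_q[u] = E_p[u], E_q[w] = E_p[w], E_q[H₂(u)] = E_p[H₂(u)], E_q[H₂(w)] = E_p[H₂(w)], and E_q[(u−w)(J(w)−J(u))] ≤ E_p[(u−w)(J(w)−J(u))]. -/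
open Finset

section MomentReduction

variable {X ι : Type*} [Fintype ι] {F : ι → X → ℝ} {f : X → ℝ}

lemma exists_ne_zero_forall_sum_mul_eq_zero (F : ι → X → ℝ) {s : Finset X}
    (hs : Fintype.card ι < #s) :
    ∃ d : X → ℝ, (∀ i, ∑ x ∈ s, d x * F i x = 0) ∧ ∃ x ∈ s, d x ≠ 0 := by
  classical
  have hv : ¬LinearIndependent ℝ fun (x : s) i => F i x := fun hli => by
    have := hli.fintype_card_le_finrank
    simp only [Module.finrank_fintype_fun_eq_card, Fintype.card_coe] at this
    omega
  obtain ⟨g, hg, y, hy⟩ := Fintype.not_linearIndependent_iff.mp hv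
  let d : X → ℝ := fun x => if h : x ∈ s then g ⟨x, h⟩ else 0
  refine ⟨d, fun i => ?_, y, y.2, by simpa [d] using hy⟩
  rw [← sum_coe_sort]
  simpa [d] using congrFun hg i

lemma exists_neg_of_sum_eq_zero {s : Finset X} {d : X → ℝ} (hsum : ∑ x ∈ s, d x = 0)
    (hne : ∃ x ∈ s, d x ≠ 0) : ∃ x ∈ s, d x < 0 := by
  by_contra! hnonneg
  obtain ⟨x, hx, hdx⟩ := hne
  exact hdx ((sum_eq_zero_iff_of_nonneg hnonneg).mp hsum x hx)

lemma exists_nonneg_add_mul_eq_zero {s : Finset X} {q d : X → ℝ} (hq : ∀ x ∈ s, 0 ≤ q x)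
    (hneg : ∃ x ∈ s, d x < 0) :
    ∃ t : ℝ, 0 ≤ t ∧ (∃ x₀ ∈ s, q x₀ + t * d x₀ = 0) ∧ ∀ x ∈ s, 0 ≤ q x + t * d x := by
  classical
  have hne : (s.filter (d · < 0)).Nonempty := by simpa [Finset.Nonempty] using hneg
  obtain ⟨x₀, hx₀, hmin⟩ := exists_min_image _ (fun x => q x / -d x) hne
  rw [mem_filter] at hx₀
  have hdx₀ : 0 < -d x₀ := neg_pos.mpr hx₀.2
  refine ⟨q x₀ / -d x₀, div_nonneg (hq x₀ hx₀.1) hdx₀.le, ⟨x₀, hx₀.1, ?_⟩, fun x hx => ?_⟩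
  · have : d x₀ ≠ 0 := hx₀.2.ne
    field_simp
    ring
  · rcases le_or_gt 0 (d x) with hdx | hdx
    · have := hq x₀ hx₀.1
      have := hq x hx
      positivity
    · have := (le_div_iff₀ (neg_pos.mpr hdx)).mp (hmin x (mem_filter.mpr ⟨hx, hdx⟩))
      linarith

lemma sum_add_mul_mul (s : Finset X) (q d g : X → ℝ) (t : ℝ) :
    ∑ x ∈ s, (q x + t * d x) * g x = ∑ x ∈ s, q x * g x + t * ∑ x ∈ s, d x * g x := by
  rw [mul_sum, ← sum_add_distrib]
  exact sum_congr rfl fun x _ => by ring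

lemma exists_eq_zero_moments_eq_of_card_lt (h1 : ∃ i, F i = 1) {s : Finset X}
    (hs : Fintype.card ι < #s) {q : X → ℝ} (hq : ∀ x ∈ s, 0 ≤ q x) :
    ∃ x₀ ∈ s, ∃ q' : X → ℝ, q' x₀ = 0 ∧ (∀ x ∈ s, 0 ≤ q' x) ∧
      (∀ i, ∑ x ∈ s, q' x * F i x = ∑ x ∈ s, q x * F i x) ∧
      ∑ x ∈ s, q' x * f x ≤ ∑ x ∈ s, q x * f x := by
  obtain ⟨d₀, hd₀F, hd₀ne⟩ := exists_ne_zero_forall_sum_mul_eq_zero F hs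
  obtain ⟨d, hdF, hdf, hdne⟩ : ∃ d : X → ℝ, (∀ i, ∑ x ∈ s, d x * F i x = 0) ∧
      ∑ x ∈ s, d x * f x ≤ 0 ∧ ∃ x ∈ s, d x ≠ 0 := by
    rcases le_or_gt (∑ x ∈ s, d₀ x * f x) 0 with hle | hlt
    · exact ⟨d₀, hd₀F, hle, hd₀ne⟩
    · refine ⟨-d₀, fun i => ?_, ?_, ?_⟩
      · simp [hd₀F i]
      · simpa using hlt.le
      · simpa using hd₀ne
  obtain ⟨i₁, hi₁⟩ := h1
  have hneg : ∃ x ∈ s, d x < 0 := exists_neg_of_sum_eq_zero (by simpa [hi₁] using hdF i₁) hdne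
  obtain ⟨t, ht, ⟨x₀, hx₀, hq'x₀⟩, hq'⟩ := exists_nonneg_add_mul_eq_zero hq hneg
  refine ⟨x₀, hx₀, fun x => q x + t * d x, hq'x₀, hq', fun i => ?_, ?_⟩
  · rw [sum_add_mul_mul, hdF i, mul_zero, add_zero]
  · rw [sum_add_mul_mul]
    nlinarith

theorem exists_subset_card_le_moments_eq (h1 : ∃ i, F i = 1) (s : Finset X) {q : X → ℝ}
    (hq : ∀ x ∈ s, 0 ≤ q x) :
    ∃ t ⊆ s, #t ≤ Fintype.card ι ∧ ∃ q' : X → ℝ, (∀ x ∈ t, 0 ≤ q' x) ∧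
      (∀ i, ∑ x ∈ t, q' x * F i x = ∑ x ∈ s, q x * F i x) ∧
      ∑ x ∈ t, q' x * f x ≤ ∑ x ∈ s, q x * f x := by
  classical
  induction s using strongInduction generalizing q with
  | H s ih =>
    by_cases hs : #s ≤ Fintype.card ι
    · exact ⟨s, subset_rfl, hs, q, hq, fun i => rfl, le_rfl⟩
    obtain ⟨x₀, hx₀, q', hq'x₀, hq', hF, hf⟩ :=
      exists_eq_zero_moments_eq_of_card_lt (f := f) h1 (not_le.mp hs) hq
    obtain ⟨t, hts, ht, q'', hq'', hF', hf'⟩ :=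
      ih (s.erase x₀) (erase_ssubset hx₀) fun x hx => hq' x (mem_of_mem_erase hx)
    have herase : ∀ g : X → ℝ, ∑ x ∈ s.erase x₀, q' x * g x = ∑ x ∈ s, q' x * g x :=
      fun g => sum_erase s (by rw [hq'x₀, zero_mul])
    refine ⟨t, hts.trans (erase_subset x₀ s), ht, q'', hq'', fun i => ?_, ?_⟩
    · rw [hF', herase, hF]
    · rw [← herase] at hf
      exact hf'.trans hf

theorem exists_card_support_le_moments_eq [Fintype X] (h1 : ∃ i, F i = 1) {q : X → ℝ}
    (hq : ∀ x, 0 ≤ q x) :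
    ∃ q' : X → ℝ, (∀ x, 0 ≤ q' x) ∧ (∃ t : Finset X, #t ≤ Fintype.card ι ∧ ∀ x, q' x ≠ 0 → x ∈ t) ∧
      (∀ i, ∑ x, q' x * F i x = ∑ x, q x * F i x) ∧ ∑ x, q' x * f x ≤ ∑ x, q x * f x := by
  classical
  obtain ⟨t, -, ht, q', hq', hF, hf⟩ :=
    exists_subset_card_le_moments_eq (f := f) h1 univ fun x _ => hq x
  have hsum : ∀ g : X → ℝ, ∑ x, (if x ∈ t then q' x else 0) * g x = ∑ x ∈ t, q' x * g x := by
    intro g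
    simp [ite_mul, sum_ite_mem]
  refine ⟨fun x => if x ∈ t then q' x else 0, fun x => ?_, ⟨t, ht, fun x hx => ?_⟩,
    fun i => (hsum (F i)).trans (hF i), (hsum f).trans_le hf⟩
  · by_cases hx : x ∈ t <;> simp [hx, hq']
  · by_contra hxt
    simp [hxt] at hx

end MomentReduction

theorem stmt3_general (X : Type) [Fintype X] (p u w : X → ℝ)
    (hp : ∀ x, 0 ≤ p x) (hp1 : ∑ x, p x = 1) :
    ∃ q : X → ℝ, (∀ x, 0 ≤ q x) ∧ (∑ x, q x) = 1 ∧
      (∃ s : Finset X, s.card ≤ 5 ∧ ∀ x, q x ≠ 0 → x ∈ s) ∧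
      (∑ x, q x * u x) = (∑ x, p x * u x) ∧
      (∑ x, q x * w x) = (∑ x, p x * w x) ∧
      (∑ x, q x * H2 (u x)) = (∑ x, p x * H2 (u x)) ∧
      (∑ x, q x * H2 (w x)) = (∑ x, p x * H2 (w x)) ∧
      (∑ x, q x * ((u x - w x) * (J (w x) - J (u x)))) ≤
        ∑ x, p x * ((u x - w x) * (J (w x) - J (u x))) := by
  obtain ⟨q, hq, hsupp, hF, hf⟩ := exists_card_support_le_moments_eq
    (F := ![1, u, w, fun x => H2 (u x), fun x => H2 (w x)])
    (f := fun x => (u x - w x) * (J (w x) - J (u x))) ⟨0, rfl⟩ hp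
  have hmass : ∑ x, q x = 1 := by simpa [hp1] using hF 0
  simp only [Fintype.card_fin] at hsupp
  exact ⟨q, hq, hmass, hsupp, hF 1, hF 2, hF 3, hF 4, hf⟩

theorem stmt3 (X : Type) [Fintype X] (p u w : X → ℝ)
    (hp : ∀ x, 0 ≤ p x) (hp1 : ∑ x, p x = 1)
    (hu : ∀ x, u x ∈ Set.Ioo (0 : ℝ) 1) (hw : ∀ x, w x ∈ Set.Ioo (0 : ℝ) 1) :
    ∃ q : X → ℝ, (∀ x, 0 ≤ q x) ∧ (∑ x, q x) = 1 ∧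
      (∃ s : Finset X, s.card ≤ 5 ∧ ∀ x, q x ≠ 0 → x ∈ s) ∧
      (∑ x, q x * u x) = (∑ x, p x * u x) ∧
      (∑ x, q x * w x) = (∑ x, p x * w x) ∧
      (∑ x, q x * H2 (u x)) = (∑ x, p x * H2 (u x)) ∧
      (∑ x, q x * H2 (w x)) = (∑ x, p x * H2 (w x)) ∧
      (∑ x, q x * ((u x - w x) * (J (w x) - J (u x)))) ≤
        ∑ x, p x * ((u x - w x) * (J (w x) - J (u x))) :=
  stmt3_general X p u w hp hp1
end

section
/- The function ζ is jointly convex: if t₁ = (m_u, m_w, e_u, e_w) and t₂ = (m_u', m_w', e_u', e_w') are two points in ℝ⁴ at which the constraint set defining ζ is nonempty, and α ∈ [0,1], then the constraint set at α·t₁ + (1−α)·t₂ is nonempty and ζ(α·t₁ + (1−α)·t₂) ≤ α·ζ(t₁) + (1−α)·ζ(t₂). -/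
/-- The set of values `(1/2)·E[(u−w)(J(w)−J(u))]` achieved by finite probability
spaces `(X, p)` and functions `u, w : X → (0,1)` meeting the four moment
constraints. -/
def zetaSet (mu mw eu ew : ℝ) : Set ℝ :=
  {c | ∃ (X : Type) (_ : Fintype X) (p u w : X → ℝ),
    (∀ x, 0 ≤ p x) ∧ (∑ x, p x) = 1 ∧
    (∀ x, u x ∈ Set.Ioo (0 : ℝ) 1) ∧ (∀ x, w x ∈ Set.Ioo (0 : ℝ) 1) ∧
    (∑ x, p x * u x) = mu ∧ (∑ x, p x * w x) = mw ∧
    (∑ x, p x * H2 (u x)) = eu ∧ (∑ x, p x * H2 (w x)) = ew ∧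
    c = (1 / 2) * ∑ x, p x * ((u x - w x) * (J (w x) - J (u x)))}

/-- `ζ(m_u, m_w, e_u, e_w)`, the infimum over the constraint set. -/
noncomputable def zeta (mu mw eu ew : ℝ) : ℝ := sInf (zetaSet mu mw eu ew)

lemma J_anti {x y : ℝ} (hx : x ∈ Set.Ioo (0:ℝ) 1) (hy : y ∈ Set.Ioo (0:ℝ) 1)
    (h : x ≤ y) : J y ≤ J x := by
  unfold J
  have h1 : (0:ℝ) < (1 - y) / y := div_pos (by linarith [hy.2]) hy.1
  have h2 : (1 - y) / y ≤ (1 - x) / x := by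
    rw [div_le_div_iff₀ hy.1 hx.1]; nlinarith
  exact Real.logb_le_logb_of_le one_lt_two h1 h2

lemma key_nonneg {x y : ℝ} (hx : x ∈ Set.Ioo (0:ℝ) 1) (hy : y ∈ Set.Ioo (0:ℝ) 1) :
    0 ≤ (x - y) * (J y - J x) := by
  rcases le_total x y with h | h
  · nlinarith [J_anti hx hy h]
  · exact mul_nonneg (by linarith) (by linarith [J_anti hy hx h])

lemma zetaSet_nonneg {mu mw eu ew c : ℝ} (h : c ∈ zetaSet mu mw eu ew) : 0 ≤ c := by
  obtain ⟨X, _, p, u, w, hp, _, hu, hw, _, _, _, _, hc⟩ := h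
  rw [hc]
  refine mul_nonneg (by norm_num) (Finset.sum_nonneg fun x _ => ?_)
  exact mul_nonneg (hp x) (key_nonneg (hu x) (hw x))

lemma zetaSet_bddBelow (mu mw eu ew : ℝ) : BddBelow (zetaSet mu mw eu ew) :=
  ⟨0, fun _ h => zetaSet_nonneg h⟩

lemma combine {mu mw eu ew mu' mw' eu' ew' α c₁ c₂ : ℝ} (hα0 : 0 ≤ α) (hα1 : α ≤ 1)
    (h1 : c₁ ∈ zetaSet mu mw eu ew) (h2 : c₂ ∈ zetaSet mu' mw' eu' ew') :
    α * c₁ + (1 - α) * c₂ ∈ zetaSet (α * mu + (1 - α) * mu') (α * mw + (1 - α) * mw')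
      (α * eu + (1 - α) * eu') (α * ew + (1 - α) * ew') := by
  obtain ⟨X, _, p, u, w, hp, hps, hu, hw, hmu, hmw, heu, hew, hc⟩ := h1
  obtain ⟨X', _, p', u', w', hp', hps', hu', hw', hmu', hmw', heu', hew', hc'⟩ := h2
  refine ⟨X ⊕ X', inferInstance, Sum.elim (fun x => α * p x) (fun x => (1 - α) * p' x),
    Sum.elim u u', Sum.elim w w', ?_, ?_, ?_, ?_, ?_, ?_, ?_, ?_, ?_⟩
  · rintro (x | x)
    · exact mul_nonneg hα0 (hp x)
    · exact mul_nonneg (by linarith) (hp' x)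
  · rw [Fintype.sum_sum_type]
    simp only [Sum.elim_inl, Sum.elim_inr, ← Finset.mul_sum, hps, hps']
    ring
  · rintro (x | x)
    · exact hu x
    · exact hu' x
  · rintro (x | x)
    · exact hw x
    · exact hw' x
  · rw [Fintype.sum_sum_type]
    simp only [Sum.elim_inl, Sum.elim_inr, mul_assoc, ← Finset.mul_sum, hmu, hmu']
  · rw [Fintype.sum_sum_type]
    simp only [Sum.elim_inl, Sum.elim_inr, mul_assoc, ← Finset.mul_sum, hmw, hmw']
  · rw [Fintype.sum_sum_type]
    simp only [Sum.elim_inl, Sum.elim_inr, mul_assoc, ← Finset.mul_sum, heu, heu']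
  · rw [Fintype.sum_sum_type]
    simp only [Sum.elim_inl, Sum.elim_inr, mul_assoc, ← Finset.mul_sum, hew, hew']
  · rw [Fintype.sum_sum_type]
    simp only [Sum.elim_inl, Sum.elim_inr, mul_assoc, ← Finset.mul_sum]
    rw [hc, hc']
    ring

theorem stmt4 (mu mw eu ew mu' mw' eu' ew' α : ℝ) (hα : α ∈ Set.Icc (0 : ℝ) 1)
    (h1 : (zetaSet mu mw eu ew).Nonempty)
    (h2 : (zetaSet mu' mw' eu' ew').Nonempty) :
    (zetaSet (α * mu + (1 - α) * mu') (α * mw + (1 - α) * mw')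
      (α * eu + (1 - α) * eu') (α * ew + (1 - α) * ew')).Nonempty ∧
    zeta (α * mu + (1 - α) * mu') (α * mw + (1 - α) * mw')
        (α * eu + (1 - α) * eu') (α * ew + (1 - α) * ew') ≤
      α * zeta mu mw eu ew + (1 - α) * zeta mu' mw' eu' ew' := by
  obtain ⟨hα0, hα1⟩ := hα
  obtain ⟨c₁, hc₁⟩ := h1
  obtain ⟨c₂, hc₂⟩ := h2
  refine ⟨⟨_, combine hα0 hα1 hc₁ hc₂⟩, ?_⟩
  refine le_of_forall_pos_le_add fun ε hε => ?_
  have hε2 : (0:ℝ) < ε / 2 := by linarith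
  obtain ⟨a, ha, halt⟩ := Real.lt_sInf_add_pos ⟨c₁, hc₁⟩ hε2 (s := zetaSet mu mw eu ew)
  obtain ⟨b, hb, hblt⟩ := Real.lt_sInf_add_pos ⟨c₂, hc₂⟩ hε2 (s := zetaSet mu' mw' eu' ew')
  have hmem := combine hα0 hα1 ha hb
  have hle : zeta (α * mu + (1 - α) * mu') (α * mw + (1 - α) * mw')
      (α * eu + (1 - α) * eu') (α * ew + (1 - α) * ew') ≤ α * a + (1 - α) * b :=
    csInf_le (zetaSet_bddBelow _ _ _ _) hmem
  have h1' : α * a ≤ α * (zeta mu mw eu ew + ε / 2) :=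
    mul_le_mul_of_nonneg_left (le_of_lt halt) hα0
  have h2' : (1 - α) * b ≤ (1 - α) * (zeta mu' mw' eu' ew' + ε / 2) :=
    mul_le_mul_of_nonneg_left (le_of_lt hblt) (by linarith)
  unfold zeta at *
  nlinarith
end

section
/- Let u, w ∈ (0,1) with u > w, and let v ∈ (1/2, 1) satisfy 2(u−w)·H₂(v) = (2v−1)·(H₂(u)+H₂(w)). Set r = (H₂(u)+H₂(w))/(2·H₂(v)). Then r ≤ 1 (equivalently H₂(v) ≥ (H₂(u)+H₂(w))/2), and r·(1−2v)·J(v) ≤ (1/2)·(u−w)·(J(w)−J(u)). -/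
open Real Set

theorem nonneg_of_hasDerivAt_of_concaveOn {ψ g : ℝ → ℝ} {a b x : ℝ}
    (hψ : ContinuousOn ψ (Icc a b)) (hderiv : ∀ t ∈ Ioo a b, HasDerivAt ψ (g t) t)
    (hg : ConcaveOn ℝ (Ico a b) g) (hga : g a = 0) (hψa : 0 ≤ ψ a) (hψb : 0 ≤ ψ b)
    (hx : x ∈ Icc a b) : 0 ≤ ψ x := by
  -- `g t / (t - a)` is antitone, so `g` changes sign at most once on `(a, b)`.
  have sign : ∀ t ∈ Ioo a b, ∀ t' ∈ Ioo a b, t ≤ t' → 0 ≤ g t' → 0 ≤ g t := by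
    intro t ht t' ht' htt' hgt'
    have hslope := hg.antitoneOn_slope_gt (left_mem_Ico.2 (ht.1.trans ht.2))
      ⟨Ioo_subset_Ico_self ht, ht.1⟩ ⟨Ioo_subset_Ico_self ht', ht'.1⟩ htt'
    simp only [slope_def_field, hga, sub_zero] at hslope
    have h1 : 0 ≤ g t / (t - a) := (div_nonneg hgt' (sub_pos.2 ht'.1).le).trans hslope
    simpa using (le_div_iff₀ (sub_pos.2 ht.1)).1 h1
  rcases hx.1.eq_or_lt with rfl | hax
  · exact hψa
  rcases hx.2.eq_or_lt with rfl | hxb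
  · exact hψb
  rcases le_or_gt 0 (g x) with hgx | hgx
  · have hmono : MonotoneOn ψ (Icc a x) := by
      refine monotoneOn_of_hasDerivWithinAt_nonneg (f' := g) (convex_Icc a x)
        (hψ.mono (Icc_subset_Icc_right hx.2)) (fun t ht ↦ ?_) fun t ht ↦ ?_ <;>
        rw [interior_Icc] at ht
      · exact (hderiv t ⟨ht.1, ht.2.trans hxb⟩).hasDerivWithinAt
      · exact sign t ⟨ht.1, ht.2.trans hxb⟩ x ⟨hax, hxb⟩ ht.2.le hgx
    exact hψa.trans (hmono (left_mem_Icc.2 hax.le) (right_mem_Icc.2 hax.le) hax.le)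
  · have hanti : AntitoneOn ψ (Icc x b) := by
      refine antitoneOn_of_hasDerivWithinAt_nonpos (f' := g) (convex_Icc x b)
        (hψ.mono (Icc_subset_Icc_left hx.1)) (fun t ht ↦ ?_) fun t ht ↦ ?_ <;>
        rw [interior_Icc] at ht
      · exact (hderiv t ⟨hax.trans ht.1, ht.2⟩).hasDerivWithinAt
      · exact le_of_not_gt fun h ↦
          hgx.not_ge (sign x ⟨hax, hxb⟩ t ⟨hax.trans ht.1, ht.2⟩ ht.1.le h.le)
    exact hψb.trans (hanti (left_mem_Icc.2 hxb.le) (right_mem_Icc.2 hxb.le) hxb.le)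

theorem ConvexOn.increment_le_increment {s : Set ℝ} {f : ℝ → ℝ} (hf : ConvexOn ℝ s f)
    {x y d : ℝ} (hx : x ∈ s) (hyd : y + d ∈ s) (hxy : x ≤ y) (hd : 0 ≤ d) :
    f (x + d) - f x ≤ f (y + d) - f y := by
  rcases (show x ≤ y + d by linarith).eq_or_lt with h | hlt
  · obtain rfl : d = 0 := by linarith
    obtain rfl : x = y := by linarith
    simp
  -- `x + d` and `y` are complementary convex combinations of `x` and `y + d`.
  have hL : 0 < y + d - x := by linarith
  set t := d / (y + d - x)
  have ht0 : 0 ≤ t := div_nonneg hd hL.le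
  have ht1 : 0 ≤ 1 - t := sub_nonneg.2 ((div_le_one hL).2 (by linarith))
  have htL : t * (y + d - x) = d := div_mul_cancel₀ d hL.ne'
  have h1 := hf.2 hx hyd ht1 ht0 (by ring)
  have h2 := hf.2 hx hyd ht0 ht1 (by ring)
  simp only [smul_eq_mul] at h1 h2
  rw [show (1 - t) * x + t * (y + d) = x + d by linear_combination htL] at h1
  rw [show t * x + (1 - t) * (y + d) = y by linear_combination -htL] at h2
  linarith

theorem binEntropy_eq_neg_mul_log (p : ℝ) :
    binEntropy p = -p * log p - (1 - p) * log (1 - p) := by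
  simp only [binEntropy, log_inv]; ring

theorem deriv_binEntropy_eq_fun : deriv binEntropy = fun p ↦ log (1 - p) - log p :=
  funext deriv_binEntropy

theorem antitoneOn_deriv_binEntropy : AntitoneOn (deriv binEntropy) (Ioo 0 1) :=
  (strictConcave_binEntropy.concaveOn.subset Ioo_subset_Icc_self (convex_Ioo 0 1)).antitoneOn_deriv
    fun _ hp ↦ differentiableAt_binEntropy hp.1.ne' hp.2.ne

theorem concaveOn_deriv_binEntropy : ConcaveOn ℝ (Ico 2⁻¹ 1) (deriv binEntropy) := by
  have hpos : ∀ p ∈ Ico (2⁻¹ : ℝ) 1, p ≠ 0 ∧ 1 - p ≠ 0 := fun p hp ↦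
    ⟨by linarith [hp.1], by linarith [hp.2]⟩
  refine AntitoneOn.concaveOn_of_deriv (convex_Ico _ _) ?_ ?_ ?_
  · rw [deriv_binEntropy_eq_fun]
    exact ((continuousOn_log.comp (by fun_prop) fun p hp ↦ (hpos p hp).2).sub
      (continuousOn_log.mono fun p hp ↦ (hpos p hp).1))
  · rw [interior_Ico, deriv_binEntropy_eq_fun]
    intro p hp
    have h := hpos p (Ioo_subset_Ico_self hp)
    exact (((differentiableAt_id.const_sub 1).log h.2).sub
      (differentiableAt_log h.1)).differentiableWithinAt
  · rw [interior_Ico]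
    intro x hx y hy hxy
    have h2 : ∀ p, deriv (deriv binEntropy) p = -1 / (p * (1 - p)) := fun p ↦ deriv2_binEntropy
    simp only [h2]
    have hy' : 0 < y * (1 - y) := mul_pos (by linarith [hy.1]) (by linarith [hy.2])
    rw [neg_div, neg_div, neg_le_neg_iff]
    exact one_div_le_one_div_of_le hy' (by nlinarith [hx.1, hy.2])

theorem four_mul_log_two_mul_le_binEntropy {p : ℝ} (hp : p ∈ Icc (0 : ℝ) 1) :
    4 * log 2 * (p * (1 - p)) ≤ binEntropy p := by
  wlog hp2 : 2⁻¹ ≤ p generalizing p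
  · have h := this (p := 1 - p) ⟨by linarith [hp.2], by linarith [hp.1]⟩ (by linarith)
    rwa [binEntropy_one_sub, sub_sub_cancel, mul_comm (1 - p)] at h
  have hpoly : ∀ t : ℝ,
      HasDerivAt (fun t ↦ 4 * log 2 * (t * (1 - t))) (4 * log 2 * (1 - 2 * t)) t := fun t ↦
    (((hasDerivAt_id' t).fun_mul ((hasDerivAt_id' t).const_sub 1)).const_mul
      (4 * log 2)).congr_deriv (by ring)
  have key := nonneg_of_hasDerivAt_of_concaveOn (a := 2⁻¹) (b := 1) (x := p)
    (ψ := fun t ↦ binEntropy t - 4 * log 2 * (t * (1 - t)))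
    (g := fun t ↦ log (1 - t) - log t - 4 * log 2 * (1 - 2 * t)) (by fun_prop)
    (fun t ht ↦ (hasDerivAt_binEntropy (by linarith [ht.1]) (by linarith [ht.2])).fun_sub (hpoly t))
    ?_ (by norm_num) (by rw [binEntropy_two_inv]; linarith) (by norm_num) ⟨hp2, hp.2⟩
  · simpa using key
  · have hlin : ConvexOn ℝ (Ico (2⁻¹ : ℝ) 1) fun t ↦ 4 * log 2 * (1 - 2 * t) :=
      ⟨convex_Ico _ _, fun x _ y _ a b _ _ hab ↦ le_of_eq <| by
        simp only [smul_eq_mul]; linear_combination -4 * log 2 * hab⟩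
    have h := concaveOn_deriv_binEntropy.sub hlin
    rw [deriv_binEntropy_eq_fun] at h
    exact h

theorem two_mul_sub_mul_sub_mul_log_le_negMulLog {a b : ℝ} (ha : 0 < a) (hb : 0 < b)
    (hab : a + b ≤ 1) :
    2 * (a - b) * (a * log a - b * log b) ≤ negMulLog (1 - (a - b) ^ 2) := by
  wlog hba : b ≤ a generalizing a b
  · have h := this hb ha (by linarith) (by linarith)
    rw [← neg_sub a b, neg_sq] at h
    linarith
  set δ := a - b with hδdef
  have hδ : 0 ≤ δ := sub_nonneg.2 hba
  have hinc := convexOn_mul_log.increment_le_increment (x := b) (y := (1 - δ) / 2) (d := δ)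
    hb.le (by simp only [mem_Ici]; linarith) (by linarith) hδ
  set x := (1 + δ) / 2 with hxdef
  rw [show b + δ = a by ring, show (1 - δ) / 2 + δ = x by ring, show (1 - δ) / 2 = 1 - x by ring]
    at hinc
  have hx0 : 0 < x := by linarith
  have hx1 : 0 < 1 - x := by linarith
  have hquad := four_mul_log_two_mul_le_binEntropy (p := x) ⟨hx0.le, by linarith⟩
  rw [binEntropy_eq_neg_mul_log] at hquad
  have hlog : log (1 - δ ^ 2) = 2 * log 2 + log x + log (1 - x) := by
    rw [show 1 - δ ^ 2 = 2 * 2 * (x * (1 - x)) by ring, log_mul (by norm_num) (by positivity),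
      log_mul (by norm_num) (by norm_num), log_mul hx0.ne' hx1.ne']
    ring
  have hmul := mul_le_mul_of_nonneg_left hinc (by linarith : 0 ≤ 2 * δ)
  rw [negMulLog, hlog]
  rw [show δ = 2 * x - 1 by linarith] at hmul ⊢
  linarith

theorem two_mul_sq_mul_binEntropy_le {a a' b b' : ℝ} (ha : 0 < a) (ha' : 0 < a') (hb : 0 < b)
    (hb' : 0 < b') (hA : a ^ 2 + a' ^ 2 = 1) (hB : b ^ 2 + b' ^ 2 = 1) :
    2 * (a * b' + a' * b) ^ 2 * binEntropy (a * b' / (a * b' + a' * b)) ≤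
      binEntropy (a ^ 2) + binEntropy (b ^ 2) := by
  set s := a * b' + a' * b
  have hs : 0 < s := by positivity
  have key := two_mul_sub_mul_sub_mul_log_le_negMulLog (mul_pos ha hb) (mul_pos ha' hb')
    (by nlinarith [sq_nonneg (a - b), sq_nonneg (a' - b')])
  rw [show 1 - (a * b - a' * b') ^ 2 = s ^ 2 by linear_combination (-b ^ 2 - b' ^ 2) * hA - hB,
    negMulLog, log_pow, log_mul ha.ne' hb.ne', log_mul ha'.ne' hb'.ne'] at key
  have hmix : 2 * s ^ 2 * binEntropy (a * b' / s) =
      -2 * s * (a * b' * (log a + log b' - log s) + a' * b * (log a' + log b - log s)) := by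
    rw [binEntropy_eq_neg_mul_log, show 1 - a * b' / s = a' * b / s by field_simp; ring,
      log_div (by positivity) hs.ne', log_div (by positivity) hs.ne', log_mul ha.ne' hb'.ne',
      log_mul ha'.ne' hb.ne']
    field_simp
    ring
  rw [hmix, binEntropy_eq_neg_mul_log, binEntropy_eq_neg_mul_log,
    show 1 - a ^ 2 = a' ^ 2 by linarith, show 1 - b ^ 2 = b' ^ 2 by linarith,
    log_pow, log_pow, log_pow, log_pow]
  push_cast at key ⊢
  linear_combination key - 2 * (a ^ 2 * log a + a' ^ 2 * log a') * hB
    - 2 * (b ^ 2 * log b + b' ^ 2 * log b') * hA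

theorem binEntropy_add_binEntropy_le {u w : ℝ} (hu : u ∈ Icc (0 : ℝ) 1)
    (hw : w ∈ Icc (0 : ℝ) 1) :
    binEntropy u + binEntropy w ≤ 2 * binEntropy ((1 + u - w) / 2) := by
  have hw' : 1 - w ∈ Icc (0 : ℝ) 1 := ⟨by linarith [hw.2], by linarith [hw.1]⟩
  have h := strictConcave_binEntropy.concaveOn.2 hu hw' (by norm_num : (0 : ℝ) ≤ 2⁻¹)
    (by norm_num : (0 : ℝ) ≤ 2⁻¹) (by norm_num)
  simp only [smul_eq_mul, binEntropy_one_sub] at h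
  rw [show 2⁻¹ * u + 2⁻¹ * (1 - w) = (1 + u - w) / 2 by ring] at h
  linarith

theorem strictAntiOn_binEntropy_div :
    StrictAntiOn (fun x ↦ binEntropy x / (2 * x - 1)) (Ioc 2⁻¹ 1) := by
  intro x hx y hy hxy
  have hx0 : 0 < 2 * x - 1 := by linarith [hx.1]
  have hlt : binEntropy y < binEntropy x :=
    binEntropy_strictAntiOn (Ioc_subset_Icc_self hx) (Ioc_subset_Icc_self hy) hxy
  calc binEntropy y / (2 * y - 1) ≤ binEntropy y / (2 * x - 1) :=
        div_le_div_of_nonneg_left (binEntropy_nonneg (by linarith [hy.1]) hy.2) hx0 (by linarith)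
    _ < binEntropy x / (2 * x - 1) := div_lt_div_of_pos_right hlt hx0

theorem binEntropy_div_eq_of_eq {u w v : ℝ} (huw : w < u) (hv : 2⁻¹ < v)
    (heq : 2 * (u - w) * binEntropy v = (2 * v - 1) * (binEntropy u + binEntropy w)) :
    binEntropy v / (2 * v - 1) = (binEntropy u + binEntropy w) / (2 * (u - w)) := by
  rw [div_eq_div_iff (by linarith) (by linarith)]
  linarith

theorem sub_le_two_mul_sub_one {u w v : ℝ} (hu : u ∈ Icc (0 : ℝ) 1) (hw : w ∈ Icc (0 : ℝ) 1)
    (huw : w < u) (hv : v ∈ Ioc 2⁻¹ 1)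
    (heq : 2 * (u - w) * binEntropy v = (2 * v - 1) * (binEntropy u + binEntropy w)) :
    u - w ≤ 2 * v - 1 := by
  set m := (1 + u - w) / 2 with hm_def
  have hm : m ∈ Ioc 2⁻¹ 1 := ⟨by linarith, by linarith [hu.2, hw.1]⟩
  suffices m ≤ v by linarith
  refine (strictAntiOn_binEntropy_div.le_iff_ge hv hm).1 ?_
  rw [binEntropy_div_eq_of_eq huw hv.1 heq, show 2 * m - 1 = u - w by ring,
    div_le_div_iff₀ (by linarith) (by linarith)]
  nlinarith [binEntropy_add_binEntropy_le hu hw]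

theorem deriv_binEntropy_sub_le {u w v : ℝ} (hu : u ∈ Ioo (0 : ℝ) 1) (hw : w ∈ Ioo (0 : ℝ) 1)
    (huw : w < u) (hv : v ∈ Ioc 2⁻¹ 1)
    (heq : 2 * (u - w) * binEntropy v = (2 * v - 1) * (binEntropy u + binEntropy w)) :
    deriv binEntropy u - deriv binEntropy w ≤ 2 * deriv binEntropy v := by
  obtain ⟨a, ha, rfl⟩ : ∃ a, 0 < a ∧ a ^ 2 = u := ⟨√u, sqrt_pos.2 hu.1, sq_sqrt hu.1.le⟩
  obtain ⟨a', ha', ha'2⟩ : ∃ a', 0 < a' ∧ a' ^ 2 = 1 - a ^ 2 :=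
    ⟨√(1 - a ^ 2), sqrt_pos.2 (by linarith [hu.2]), sq_sqrt (by linarith [hu.2])⟩
  obtain ⟨b, hb, rfl⟩ : ∃ b, 0 < b ∧ b ^ 2 = w := ⟨√w, sqrt_pos.2 hw.1, sq_sqrt hw.1.le⟩
  obtain ⟨b', hb', hb'2⟩ : ∃ b', 0 < b' ∧ b' ^ 2 = 1 - b ^ 2 :=
    ⟨√(1 - b ^ 2), sqrt_pos.2 (by linarith [hw.2]), sq_sqrt (by linarith [hw.2])⟩
  set s := a * b' + a' * b
  have hs : 0 < s := by positivity
  have hdiff : a ^ 2 - b ^ 2 = (a * b' - a' * b) * s := by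
    linear_combination b ^ 2 * ha'2 - a ^ 2 * hb'2
  have hpos : 0 < a * b' - a' * b := pos_of_mul_pos_left (hdiff ▸ sub_pos.2 huw) hs.le
  set x := a * b' / s with hx_def
  have hx : x ∈ Ioo 2⁻¹ 1 := by
    constructor
    · rw [lt_div_iff₀ hs]; linarith
    · rw [div_lt_one hs]; linarith [mul_pos ha' hb]
  have h2x : 2 * x - 1 = (a * b' - a' * b) / s := by rw [hx_def]; field_simp; ring
  have hvx : v ≤ x := by
    refine (strictAntiOn_binEntropy_div.le_iff_ge (Ioo_subset_Ioc_self hx) hv).1 ?_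
    have hG := two_mul_sq_mul_binEntropy_le ha ha' hb hb' (by linarith) (by linarith)
    rw [binEntropy_div_eq_of_eq huw hv.1 heq, h2x, hdiff]
    calc binEntropy x / ((a * b' - a' * b) / s)
        = 2 * s ^ 2 * binEntropy x / (2 * ((a * b' - a' * b) * s)) := by field_simp
      _ ≤ _ := div_le_div_of_nonneg_right hG (by positivity)
  have h1x : 1 - x = a' * b / s := by rw [hx_def]; field_simp; ring
  have hderiv : deriv binEntropy (a ^ 2) - deriv binEntropy (b ^ 2) = 2 * deriv binEntropy x := by
    simp only [deriv_binEntropy]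
    rw [← ha'2, ← hb'2, h1x, log_div (by positivity) hs.ne', log_div (by positivity) hs.ne',
      log_mul ha'.ne' hb.ne', log_mul ha.ne' hb'.ne', log_pow, log_pow, log_pow, log_pow]
    push_cast; ring
  rw [hderiv]
  have := antitoneOn_deriv_binEntropy ⟨by linarith [hv.1], hvx.trans_lt hx.2⟩
    ⟨by linarith [hx.1], hx.2⟩ hvx
  linarith

theorem H2_eq_binEntropy_div (x : ℝ) : H2 x = binEntropy x / log 2 := by
  rw [H2, binEntropy_eq_neg_mul_log, logb, logb]; ring

theorem J_eq_deriv_binEntropy_div {x : ℝ} (hx : x ∈ Ioo (0 : ℝ) 1) :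
    J x = deriv binEntropy x / log 2 := by
  rw [J, logb, log_div (by linarith [hx.2]) hx.1.ne', deriv_binEntropy]

theorem stmt7 (u w v r : ℝ)
    (hu : u ∈ Set.Ioo (0 : ℝ) 1) (hw : w ∈ Set.Ioo (0 : ℝ) 1) (huw : u > w)
    (hv : v ∈ Set.Ioo (1 / 2 : ℝ) 1)
    (hveq : 2 * (u - w) * H2 v = (2 * v - 1) * (H2 u + H2 w))
    (hr : r = (H2 u + H2 w) / (2 * H2 v)) :
    r ≤ 1 ∧ r * (1 - 2 * v) * J v ≤ (1 / 2) * (u - w) * (J w - J u) := by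
  have hlog2 : 0 < log 2 := log_pos one_lt_two
  have hv' : v ∈ Ioc 2⁻¹ 1 := ⟨by linarith [hv.1], hv.2.le⟩
  have hv0 : 0 < 2 * v - 1 := by linarith [hv.1]
  simp only [H2_eq_binEntropy_div] at hveq hr
  have heq : 2 * (u - w) * binEntropy v = (2 * v - 1) * (binEntropy u + binEntropy w) := by
    field_simp at hveq; linarith
  have hr' : r = (u - w) / (2 * v - 1) := by
    have hH : 0 < binEntropy v := binEntropy_pos (by linarith [hv.1]) hv.2
    rw [hr, div_eq_div_iff (by positivity) hv0.ne']
    field_simp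
    linarith
  refine ⟨?_, ?_⟩
  · rw [hr', div_le_one hv0]
    exact sub_le_two_mul_sub_one (Ioo_subset_Icc_self hu) (Ioo_subset_Icc_self hw) huw hv' heq
  · have hJ := deriv_binEntropy_sub_le hu hw huw hv' heq
    rw [J_eq_deriv_binEntropy_div hu, J_eq_deriv_binEntropy_div hw,
      J_eq_deriv_binEntropy_div ⟨by linarith [hv.1], hv.2⟩, hr', ← sub_nonneg]
    have e : 1 / 2 * (u - w) * (deriv binEntropy w / log 2 - deriv binEntropy u / log 2) -
        (u - w) / (2 * v - 1) * (1 - 2 * v) * (deriv binEntropy v / log 2) =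
        (u - w) * (2 * deriv binEntropy v - (deriv binEntropy u - deriv binEntropy w)) /
          (2 * log 2) := by
      field_simp; ring
    rw [e]
    exact div_nonneg (mul_nonneg (by linarith) (by linarith)) (by positivity)
end

section
/- Define f(b) = (1+b)²·ln(1+b) − b²·ln b − b·ln b − 2b·ln 4 for b > 0. Then f(b) ≥ 0 for all b > 0, with equality if and only if b = 1. -/
/-!
With `p = b / (1 + b)`, `f(b) / (1 + b)²` is `H(p) - 4 p (1 - p) log 2`, where `H` is the binary
entropy in nats; the symmetry `p ↔ 1 - p` becomes `f(b) = b² f(1/b)`, which reduces the claim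
to `b > 1`. There `f(1) = f'(1) = 0` and
`f''(b) = 2 (log (1 + b) - log b) - 1/b ≥ 2/(1 + b) - 1/b > 0`,
the middle step being `log x ≥ 1 - 1/x` at `x = (1 + b)/b`.
-/

open Real Set

noncomputable def logGap (b : ℝ) : ℝ :=
  (1 + b) ^ 2 * log (1 + b) - b ^ 2 * log b - b * log b - 2 * b * log 4

noncomputable def logGapDeriv (b : ℝ) : ℝ :=
  2 * (1 + b) * log (1 + b) - (2 * b + 1) * log b - 2 * log 4

lemma pos_of_hasDerivAt_pos_of_eq_zero {h h' : ℝ → ℝ} {a x : ℝ}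
    (hd : ∀ y, a ≤ y → HasDerivAt h (h' y) y) (hpos : ∀ y, a < y → 0 < h' y)
    (ha : h a = 0) (hx : a < x) : 0 < h x := by
  have hmono : StrictMonoOn h (Ici a) :=
    strictMonoOn_of_hasDerivWithinAt_pos (convex_Ici a)
      (fun y hy => (hd y hy).continuousAt.continuousWithinAt)
      (fun y hy => (hd y (by rw [interior_Ici] at hy; exact hy.le)).hasDerivWithinAt)
      (fun y hy => hpos y (by rwa [interior_Ici] at hy))
  simpa [ha] using hmono self_mem_Ici hx.le hx

lemma inv_one_add_le_log_one_add_sub_log {b : ℝ} (hb : 0 < b) :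
    (1 + b)⁻¹ ≤ log (1 + b) - log b := by
  have h := one_sub_inv_le_log_of_pos (div_pos (add_pos one_pos hb) hb)
  rw [log_div (by positivity) hb.ne', inv_div] at h
  convert h using 1
  field_simp
  ring

lemma hasDerivAt_logGap {b : ℝ} (hb : 0 < b) : HasDerivAt logGap (logGapDeriv b) b := by
  have h1 : HasDerivAt (fun x => 1 + x) 1 b := (hasDerivAt_id b).const_add 1
  have hlog := hasDerivAt_log hb.ne'
  have h : HasDerivAt logGap _ b :=
    ((((h1.pow 2).mul (h1.log (by positivity))).sub ((hasDerivAt_pow 2 b).mul hlog)).sub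
      ((hasDerivAt_id b).mul hlog)).sub (((hasDerivAt_id b).const_mul 2).mul_const (log 4))
  refine h.congr_deriv ?_
  simp only [logGapDeriv, id, Pi.pow_apply]
  field_simp
  ring

lemma hasDerivAt_logGapDeriv {b : ℝ} (hb : 0 < b) :
    HasDerivAt logGapDeriv (2 * (log (1 + b) - log b) - b⁻¹) b := by
  have h1 : HasDerivAt (fun x => 1 + x) 1 b := (hasDerivAt_id b).const_add 1
  have h : HasDerivAt logGapDeriv _ b :=
    (((h1.const_mul 2).mul (h1.log (by positivity))).sub
      ((((hasDerivAt_id b).const_mul 2).add_const 1).mul (hasDerivAt_log hb.ne'))).sub_const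
      (2 * log 4)
  refine h.congr_deriv ?_
  simp only [id]
  field_simp
  ring

lemma log_four : log 4 = 2 * log 2 := by
  rw [show (4 : ℝ) = 2 ^ 2 by norm_num, log_pow]
  norm_num

lemma logGap_one : logGap 1 = 0 := by
  norm_num [logGap, log_four]
  ring

lemma logGapDeriv_one : logGapDeriv 1 = 0 := by
  norm_num [logGapDeriv, log_four]
  ring

lemma logGapDeriv_pos {b : ℝ} (hb : 1 < b) : 0 < logGapDeriv b := by
  refine pos_of_hasDerivAt_pos_of_eq_zero
    (fun _ hy => hasDerivAt_logGapDeriv (by linarith)) (fun y hy => ?_) logGapDeriv_one hb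
  have hy0 : 0 < y := by linarith
  have hlog := inv_one_add_le_log_one_add_sub_log hy0
  have hinv : y⁻¹ < 2 * (1 + y)⁻¹ := by
    rw [inv_lt_iff_one_lt_mul₀ hy0]; field_simp; linarith
  linarith

lemma logGap_pos_of_one_lt {b : ℝ} (hb : 1 < b) : 0 < logGap b :=
  pos_of_hasDerivAt_pos_of_eq_zero (fun _ hy => hasDerivAt_logGap (by linarith))
    (fun _ hy => logGapDeriv_pos hy) logGap_one hb

lemma logGap_eq_sq_mul_logGap_inv {b : ℝ} (hb : 0 < b) : logGap b = b ^ 2 * logGap b⁻¹ := by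
  have h : 1 + b⁻¹ = (1 + b) / b := by field_simp; ring
  simp only [logGap, h, log_div (by positivity : 1 + b ≠ 0) hb.ne', log_inv]
  field_simp
  ring

lemma logGap_pos {b : ℝ} (hb : 0 < b) (hb1 : b ≠ 1) : 0 < logGap b := by
  rcases hb1.lt_or_gt with h | h
  · rw [logGap_eq_sq_mul_logGap_inv hb]
    exact mul_pos (by positivity) (logGap_pos_of_one_lt ((one_lt_inv₀ hb).mpr h))
  · exact logGap_pos_of_one_lt h

theorem stmt9 (b : ℝ) (hb : 0 < b) :
    0 ≤ (1 + b) ^ 2 * Real.log (1 + b) - b ^ 2 * Real.log b - b * Real.log b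
        - 2 * b * Real.log 4 ∧
    ((1 + b) ^ 2 * Real.log (1 + b) - b ^ 2 * Real.log b - b * Real.log b
        - 2 * b * Real.log 4 = 0 ↔ b = 1) := by
  change 0 ≤ logGap b ∧ (logGap b = 0 ↔ b = 1)
  rcases eq_or_ne b 1 with rfl | hb1
  · simp [logGap_one]
  · have := logGap_pos hb hb1
    exact ⟨this.le, by simp [this.ne', hb1]⟩
end

section
/- Let n ≥ 1 and let d : ℝ → ({−1,1}ⁿ → (−1,1)) be such that for every vertex y the map t ↦ d_y(t) is differentiable and satisfies d_y'(t) = Σ_{x : x∼y} (d_x(t) − d_y(t)). Define r(t) = 2⁻ⁿ · Σ_y √(1 − d_y(t)²). Then r is differentiable and for every t, r'(t) = 2⁻ⁿ · Σ_{x∼y} (d_x(t) − d_y(t)) · (d_x(t)/√(1−d_x(t)²) − d_y(t)/√(1−d_y(t)²)), where the sum is over unordered pairs of adjacent vertices, each counted once. -/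
open Finset

lemma flipCoord_involutive {n : ℕ} (i : Fin n) : Function.Involutive (flipCoord · i) := by
  intro y
  funext j
  by_cases h : j = i <;> simp [flipCoord, Function.update, h]

theorem Function.Involutive.sum_sub_mul_sub {α R : Type*} [Fintype α] [CommRing R]
    {σ : α → α} (hσ : Function.Involutive σ) (g h : α → R) :
    ∑ a, (g (σ a) - g a) * (h (σ a) - h a) = -2 * ∑ a, h a * (g (σ a) - g a) := by
  have hreindex : ∑ a, (g (σ a) - g a) * h (σ a) = ∑ a, (g a - g (σ a)) * h a := by
    simpa only [hσ.coe_toPerm, hσ _] using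
      Equiv.sum_comp (hσ.toPerm σ) fun a => (g a - g (σ a)) * h a
  calc ∑ a, (g (σ a) - g a) * (h (σ a) - h a)
      = ∑ a, (g (σ a) - g a) * h (σ a) - ∑ a, (g (σ a) - g a) * h a := by
        simp only [mul_sub, sum_sub_distrib]
    _ = ∑ a, (g a - g (σ a)) * h a - ∑ a, (g (σ a) - g a) * h a := by rw [hreindex]
    _ = -2 * ∑ a, h a * (g (σ a) - g a) := by
        rw [mul_sum, ← sum_sub_distrib]
        exact sum_congr rfl fun a _ => by ring

theorem sum_flipCoord_sub_mul_sub {n : ℕ} {R : Type*} [CommRing R] (g h : (Fin n → Bool) → R) :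
    ∑ y, ∑ i, (g (flipCoord y i) - g y) * (h (flipCoord y i) - h y) =
      -2 * ∑ y, h y * ∑ i, (g (flipCoord y i) - g y) := by
  rw [sum_comm]
  simp only [fun i => (flipCoord_involutive i).sum_sub_mul_sub g h, ← mul_sum]
  rw [sum_comm]
  simp only [mul_sum]

theorem HasDerivAt.sqrt_one_sub_sq {f : ℝ → ℝ} {f' x : ℝ} (hf : HasDerivAt f f' x)
    (hx : f x ∈ Set.Ioo (-1) 1) :
    HasDerivAt (fun s => √(1 - f s ^ 2)) (-(f x / √(1 - f x ^ 2)) * f') x := by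
  have hpos : 0 < 1 - f x ^ 2 := by nlinarith [hx.1, hx.2]
  refine (((hf.pow 2).const_sub 1).sqrt hpos.ne').congr_deriv ?_
  simp only [Pi.pow_apply]
  field_simp
  ring

theorem stmt11_general (n : ℕ) (d : ℝ → (Fin n → Bool) → ℝ)
    (hmem : ∀ t y, d t y ∈ Set.Ioo (-1 : ℝ) 1)
    (hode : ∀ (y : Fin n → Bool) (t : ℝ),
      HasDerivAt (fun s => d s y) (∑ i : Fin n, (d t (flipCoord y i) - d t y)) t)
    (t : ℝ) :
    HasDerivAt (fun s => ((2 : ℝ) ^ n)⁻¹ * ∑ y : Fin n → Bool,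
        Real.sqrt (1 - (d s y) ^ 2))
      (((2 : ℝ) ^ n)⁻¹ * ((1 / 2) * ∑ y : Fin n → Bool, ∑ i : Fin n,
        (d t (flipCoord y i) - d t y) *
          (d t (flipCoord y i) / Real.sqrt (1 - (d t (flipCoord y i)) ^ 2) -
           d t y / Real.sqrt (1 - (d t y) ^ 2)))) t := by
  refine ((HasDerivAt.fun_sum fun y _ => (hode y t).sqrt_one_sub_sq (hmem t y)).const_mul
    ((2 : ℝ) ^ n)⁻¹).congr_deriv ?_
  rw [sum_flipCoord_sub_mul_sub (d t) fun x => d t x / √(1 - d t x ^ 2)]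
  simp only [neg_mul, sum_neg_distrib]
  ring

theorem stmt11 (n : ℕ) (hn : 1 ≤ n) (d : ℝ → (Fin n → Bool) → ℝ)
    (hmem : ∀ t y, d t y ∈ Set.Ioo (-1 : ℝ) 1)
    (hode : ∀ (y : Fin n → Bool) (t : ℝ),
      HasDerivAt (fun s => d s y) (∑ i : Fin n, (d t (flipCoord y i) - d t y)) t)
    (t : ℝ) :
    HasDerivAt (fun s => ((2 : ℝ) ^ n)⁻¹ * ∑ y : Fin n → Bool,
        Real.sqrt (1 - (d s y) ^ 2))
      (((2 : ℝ) ^ n)⁻¹ * ((1 / 2) * ∑ y : Fin n → Bool, ∑ i : Fin n,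
        (d t (flipCoord y i) - d t y) *
          (d t (flipCoord y i) / Real.sqrt (1 - (d t (flipCoord y i)) ^ 2) -
           d t y / Real.sqrt (1 - (d t y) ^ 2)))) t :=
  stmt11_general n d hmem hode t
end

section
/- Let (X,p) be a finite probability space and let u,w : X → (−1,1). Then (1/2)·E[(u−w)·(u/√(1−u²) − w/√(1−w²))] ≥ ((E[u−w]/2)² + (E[√(1−u²) − √(1−w²)]/2)²) · (1/E[√(1−u²)] + 1/E[√(1−w²)]). -/
/-!
Put `a = √(1 - u²)` and `b = √(1 - w²)`, so that `(u, a)` and `(w, b)` lie on the unit circle.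
Then pointwise `(u - w)(u/a - w/b) = ½ ((u - w)² + (a - b)²)(1/a + 1/b)`, and each of the four
resulting terms `E[f²/s]` is bounded below by `E[f]²/E[s]` (Cauchy–Schwarz in Engel form).
-/

open Finset Real

lemma sq_sum_mul_div_sum_mul_le {X : Type*} [Fintype X] (p s f : X → ℝ)
    (hp : ∀ x, 0 ≤ p x) (hs : ∀ x, 0 < s x) :
    (∑ x, p x * f x) ^ 2 / ∑ x, p x * s x ≤ ∑ x, p x * (f x ^ 2 / s x) := by
  have hfs : ∀ x, 0 ≤ p x * (f x ^ 2 / s x) := fun x =>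
    mul_nonneg (hp x) (div_nonneg (sq_nonneg _) (hs x).le)
  refine div_le_of_le_mul₀ (sum_nonneg fun x _ => mul_nonneg (hp x) (hs x).le)
    (sum_nonneg fun x _ => hfs x) ?_
  refine sum_sq_le_sum_mul_sum_of_sq_le_mul _ (fun x _ => hfs x)
    (fun x _ => mul_nonneg (hp x) (hs x).le) fun x _ => le_of_eq ?_
  field_simp [(hs x).ne']

lemma sub_mul_sub_div_sqrt_one_sub_sq {u w : ℝ} (hu : u ^ 2 < 1) (hw : w ^ 2 < 1) :
    (u - w) * (u / √(1 - u ^ 2) - w / √(1 - w ^ 2)) =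
      ((u - w) ^ 2 + (√(1 - u ^ 2) - √(1 - w ^ 2)) ^ 2) *
        (1 / √(1 - u ^ 2) + 1 / √(1 - w ^ 2)) / 2 := by
  have ha : (√(1 - u ^ 2)) ^ 2 = 1 - u ^ 2 := sq_sqrt (by linarith)
  have hb : (√(1 - w ^ 2)) ^ 2 = 1 - w ^ 2 := sq_sqrt (by linarith)
  have ha0 : √(1 - u ^ 2) ≠ 0 := (sqrt_pos.2 (by linarith)).ne'
  have hb0 : √(1 - w ^ 2) ≠ 0 := (sqrt_pos.2 (by linarith)).ne'
  field_simp
  linear_combination (√(1 - w ^ 2) - √(1 - u ^ 2)) * ha + (√(1 - u ^ 2) - √(1 - w ^ 2)) * hb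

theorem stmt14_general (X : Type) [Fintype X] (p u w : X → ℝ)
    (hp : ∀ x, 0 ≤ p x)
    (hu : ∀ x, u x ∈ Set.Ioo (-1 : ℝ) 1) (hw : ∀ x, w x ∈ Set.Ioo (-1 : ℝ) 1) :
    (1 / 2) * (∑ x, p x * ((u x - w x) *
        (u x / Real.sqrt (1 - (u x) ^ 2) - w x / Real.sqrt (1 - (w x) ^ 2)))) ≥
      (((∑ x, p x * (u x - w x)) / 2) ^ 2 +
        ((∑ x, p x * (Real.sqrt (1 - (u x) ^ 2) - Real.sqrt (1 - (w x) ^ 2))) / 2) ^ 2) *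
        (1 / (∑ x, p x * Real.sqrt (1 - (u x) ^ 2)) +
         1 / (∑ x, p x * Real.sqrt (1 - (w x) ^ 2))) := by
  have hu2 : ∀ x, u x ^ 2 < 1 := fun x => sq_lt_one_iff_abs_lt_one _ |>.2 (abs_lt.2 (hu x))
  have hw2 : ∀ x, w x ^ 2 < 1 := fun x => sq_lt_one_iff_abs_lt_one _ |>.2 (abs_lt.2 (hw x))
  set a : X → ℝ := fun x => √(1 - u x ^ 2)
  set b : X → ℝ := fun x => √(1 - w x ^ 2)
  have ha : ∀ x, 0 < a x := fun x => sqrt_pos.2 (by linarith [hu2 x])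
  have hb : ∀ x, 0 < b x := fun x => sqrt_pos.2 (by linarith [hw2 x])
  have hsum : ∑ x, p x * ((u x - w x) * (u x / a x - w x / b x)) =
      (1 / 2) * (∑ x, p x * ((u x - w x) ^ 2 / a x) + ∑ x, p x * ((a x - b x) ^ 2 / a x) +
        ∑ x, p x * ((u x - w x) ^ 2 / b x) + ∑ x, p x * ((a x - b x) ^ 2 / b x)) := by
    simp only [← sum_add_distrib, mul_sum]
    refine sum_congr rfl fun x _ => ?_
    rw [sub_mul_sub_div_sqrt_one_sub_sq (hu2 x) (hw2 x)]
    ring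
  rw [ge_iff_le, hsum]
  calc _ = (1 / 4) * ((∑ x, p x * (u x - w x)) ^ 2 / ∑ x, p x * a x +
        (∑ x, p x * (a x - b x)) ^ 2 / ∑ x, p x * a x +
        (∑ x, p x * (u x - w x)) ^ 2 / ∑ x, p x * b x +
        (∑ x, p x * (a x - b x)) ^ 2 / ∑ x, p x * b x) := by ring
    _ ≤ _ := by
      linarith [sq_sum_mul_div_sum_mul_le p a (fun x => u x - w x) hp ha,
        sq_sum_mul_div_sum_mul_le p a (fun x => a x - b x) hp ha,
        sq_sum_mul_div_sum_mul_le p b (fun x => u x - w x) hp hb,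
        sq_sum_mul_div_sum_mul_le p b (fun x => a x - b x) hp hb]

theorem stmt14 (X : Type) [Fintype X] (p u w : X → ℝ)
    (hp : ∀ x, 0 ≤ p x) (hp1 : ∑ x, p x = 1)
    (hu : ∀ x, u x ∈ Set.Ioo (-1 : ℝ) 1) (hw : ∀ x, w x ∈ Set.Ioo (-1 : ℝ) 1) :
    (1 / 2) * (∑ x, p x * ((u x - w x) *
        (u x / Real.sqrt (1 - (u x) ^ 2) - w x / Real.sqrt (1 - (w x) ^ 2)))) ≥
      (((∑ x, p x * (u x - w x)) / 2) ^ 2 +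
        ((∑ x, p x * (Real.sqrt (1 - (u x) ^ 2) - Real.sqrt (1 - (w x) ^ 2))) / 2) ^ 2) *
        (1 / (∑ x, p x * Real.sqrt (1 - (u x) ^ 2)) +
         1 / (∑ x, p x * Real.sqrt (1 - (w x) ^ 2))) :=
  stmt14_general X p u w hp hu hw
end
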